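/- For all integers c ≥ 0, X ≥ 0 and real p with 0 < p < 1, the sum ∑_{n=X}^∞ n^c · p^(n-X) is at most (c+1)! · ((X+c)^c/(1-p) + 1/(1-p)^(c+1)). -/
import Mathlib

/-- `n^k ≤ k! * (n+k).choose k` in the naturals. -/
lemma aux_pow_le_fact_mul_choose (n k : ℕ) :
    n ^ k ≤ k.factorial * (n + k).choose k := by
  rw [← Nat.descFactorial_eq_factorial_mul_choose,
    Nat.add_descFactorial_eq_ascFactorial]
  calc n ^ k ≤ (n + 1) ^ k := Nat.pow_le_pow_left (Nat.le_succ n) k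
    _ ≤ (n + 1).ascFactorial k := Nat.pow_succ_le_ascFactorial (n + 1) k

/-- `∑ n^k p^n ≤ k!/(1-p)^(k+1)`. -/
lemma aux_tsum_pow_mul_geom_le (k : ℕ) {p : ℝ} (hp0 : 0 ≤ p) (hp1 : p < 1) :
    ∑' n : ℕ, (n : ℝ) ^ k * p ^ n ≤ k.factorial * (1 / (1 - p) ^ (k + 1)) := by
  have hnorm : ‖p‖ < 1 := by rwa [Real.norm_eq_abs, abs_of_nonneg hp0]
  have hs1 := summable_pow_mul_geometric_of_norm_lt_one (R := ℝ) k hnorm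
  have hs2 : Summable (fun n : ℕ => ((n + k).choose k : ℝ) * p ^ n) :=
    summable_choose_mul_geometric_of_norm_lt_one k hnorm
  calc ∑' n : ℕ, (n : ℝ) ^ k * p ^ n
      ≤ ∑' n : ℕ, (k.factorial : ℝ) * (((n + k).choose k : ℝ) * p ^ n) := by
        apply Summable.tsum_le_tsum _ hs1 (hs2.mul_left _)
        intro n
        have hn : ((n : ℝ) ^ k) ≤ (k.factorial : ℝ) * ((n + k).choose k : ℝ) := by
          have := aux_pow_le_fact_mul_choose n k
          exact_mod_cast this
        have hpn : (0 : ℝ) ≤ p ^ n := pow_nonneg hp0 n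
        calc (n : ℝ) ^ k * p ^ n ≤ (k.factorial * ((n + k).choose k : ℝ)) * p ^ n :=
              mul_le_mul_of_nonneg_right hn hpn
          _ = (k.factorial : ℝ) * (((n + k).choose k : ℝ) * p ^ n) := by ring
    _ = k.factorial * (1 / (1 - p) ^ (k + 1)) := by
        rw [tsum_mul_left, tsum_choose_mul_geometric_of_norm_lt_one k hnorm]

/-- Key elementary inequality: `u^(c-k) * v^(k+1) ≤ u^c * v + v^(c+1)` for
`0 ≤ u`, `1 ≤ v`, `k ≤ c`. -/
lemma aux_mixed_pow_le {u v : ℝ} (hu : 0 ≤ u) (hv : 1 ≤ v) {k c : ℕ} (hk : k ≤ c) :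
    u ^ (c - k) * v ^ (k + 1) ≤ u ^ c * v + v ^ (c + 1) := by
  have hv0 : (0 : ℝ) ≤ v := le_trans zero_le_one hv
  rcases le_total u v with h | h
  · have h1 : u ^ (c - k) * v ^ (k + 1) ≤ v ^ (c - k) * v ^ (k + 1) :=
      mul_le_mul_of_nonneg_right (pow_le_pow_left₀ hu h _) (pow_nonneg hv0 _)
    have h2 : v ^ (c - k) * v ^ (k + 1) = v ^ (c + 1) := by
      rw [← pow_add]; congr 1; omega
    have h3 : 0 ≤ u ^ c * v := mul_nonneg (pow_nonneg hu _) hv0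
    nlinarith [h1, h2.le, h3]
  · have h1 : v ^ (k + 1) ≤ u ^ k * v := by
      rw [pow_succ]
      exact mul_le_mul_of_nonneg_right (pow_le_pow_left₀ hv0 h _) hv0
    have h2 : u ^ (c - k) * v ^ (k + 1) ≤ u ^ (c - k) * (u ^ k * v) :=
      mul_le_mul_of_nonneg_left h1 (pow_nonneg hu _)
    have h3 : u ^ (c - k) * (u ^ k * v) = u ^ c * v := by
      rw [← mul_assoc, ← pow_add]; congr 2; omega
    have h4 : 0 ≤ v ^ (c + 1) := pow_nonneg hv0 _
    nlinarith [h2, h3.le, h4]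

/-- For all integers `c ≥ 0`, `X ≥ 0` and real `p` with `0 < p < 1`,
`∑_{n=X}^∞ n^c · p^(n-X) ≤ (c+1)! · ((X+c)^c/(1-p) + 1/(1-p)^(c+1))`. -/
theorem stmt_0 (c X : ℕ) (p : ℝ) (hp0 : 0 < p) (hp1 : p < 1) :
    ∑' n : ℕ, ((X + n : ℕ) : ℝ) ^ c * p ^ n ≤
      (Nat.factorial (c + 1)) * (((X + c : ℕ) : ℝ) ^ c / (1 - p) + 1 / (1 - p) ^ (c + 1)) := by
  have hnorm : ‖p‖ < 1 := by
    rwa [Real.norm_eq_abs, abs_of_nonneg hp0.le]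
  have h1p : (0 : ℝ) < 1 - p := by linarith
  -- Expand by the binomial theorem and sum term by term.
  have expand : ∀ n : ℕ, ((X + n : ℕ) : ℝ) ^ c * p ^ n =
      ∑ k ∈ Finset.range (c + 1),
        ((X : ℝ) ^ (c - k) * (c.choose k : ℝ)) * ((n : ℝ) ^ k * p ^ n) := by
    intro n
    push_cast
    rw [add_comm (X : ℝ) (n : ℝ), add_pow, Finset.sum_mul]
    apply Finset.sum_congr rfl
    intro k hk
    ring
  have hsummable : ∀ k : ℕ, Summable (fun n : ℕ =>
      ((X : ℝ) ^ (c - k) * (c.choose k : ℝ)) * ((n : ℝ) ^ k * p ^ n)) := fun k =>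
    (summable_pow_mul_geometric_of_norm_lt_one (R := ℝ) k hnorm).mul_left _
  have hswap : ∑' n : ℕ, ((X + n : ℕ) : ℝ) ^ c * p ^ n =
      ∑ k ∈ Finset.range (c + 1),
        ∑' n : ℕ, ((X : ℝ) ^ (c - k) * (c.choose k : ℝ)) * ((n : ℝ) ^ k * p ^ n) := by
    rw [← Summable.tsum_finsetSum (fun k _ => hsummable k)]
    exact tsum_congr expand
  rw [hswap]
  -- Bound each term.
  have key : ∀ k ∈ Finset.range (c + 1),
      ∑' n : ℕ, ((X : ℝ) ^ (c - k) * (c.choose k : ℝ)) * ((n : ℝ) ^ k * p ^ n) ≤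
        (Nat.factorial c : ℝ) * (((X : ℝ)) ^ c / (1 - p) + 1 / (1 - p) ^ (c + 1)) := by
    intro k hk
    rw [Finset.mem_range] at hk
    have hkc : k ≤ c := Nat.lt_succ_iff.mp hk
    rw [tsum_mul_left]
    have hX : (0 : ℝ) ≤ (X : ℝ) ^ (c - k) * (c.choose k : ℝ) := by positivity
    have hb := aux_tsum_pow_mul_geom_le k hp0.le hp1
    calc ((X : ℝ) ^ (c - k) * (c.choose k : ℝ)) * ∑' n : ℕ, (n : ℝ) ^ k * p ^ n
        ≤ ((X : ℝ) ^ (c - k) * (c.choose k : ℝ)) * (k.factorial * (1 / (1 - p) ^ (k + 1))) :=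
          mul_le_mul_of_nonneg_left hb hX
      _ = ((c.choose k : ℝ) * k.factorial) * ((X : ℝ) ^ (c - k) * (1 / (1 - p)) ^ (k + 1)) := by
          simp only [one_div, inv_pow]; ring
      _ ≤ (Nat.factorial c : ℝ) * ((X : ℝ) ^ c * (1 / (1 - p)) + (1 / (1 - p)) ^ (c + 1)) := by
          apply mul_le_mul
          · have : c.choose k * k.factorial ≤ c.factorial := by
              have := Nat.choose_mul_factorial_mul_factorial hkc
              calc c.choose k * k.factorial ≤ c.choose k * k.factorial * (c - k).factorial :=
                Nat.le_mul_of_pos_right _ (Nat.factorial_pos _)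
              _ = c.factorial := this
            exact_mod_cast this
          · apply aux_mixed_pow_le (by positivity) _ hkc
            rw [le_div_iff₀ h1p]; linarith
          · positivity
          · positivity
      _ = (Nat.factorial c : ℝ) * ((X : ℝ) ^ c / (1 - p) + 1 / (1 - p) ^ (c + 1)) := by
          simp only [one_div, inv_pow]; ring
  calc ∑ k ∈ Finset.range (c + 1),
        ∑' n : ℕ, ((X : ℝ) ^ (c - k) * (c.choose k : ℝ)) * ((n : ℝ) ^ k * p ^ n)
      ≤ ∑ k ∈ Finset.range (c + 1),
        (Nat.factorial c : ℝ) * (((X : ℝ)) ^ c / (1 - p) + 1 / (1 - p) ^ (c + 1)) :=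
        Finset.sum_le_sum key
    _ = (c + 1) * ((Nat.factorial c : ℝ) * (((X : ℝ)) ^ c / (1 - p) + 1 / (1 - p) ^ (c + 1))) := by
        rw [Finset.sum_const, Finset.card_range]; push_cast; ring
    _ ≤ (Nat.factorial (c + 1)) * (((X + c : ℕ) : ℝ) ^ c / (1 - p) + 1 / (1 - p) ^ (c + 1)) := by
        rw [Nat.factorial_succ]
        push_cast
        rw [mul_assoc]
        have hXc : (X : ℝ) ^ c ≤ ((X : ℝ) + c) ^ c :=
          pow_le_pow_left₀ (by positivity) (by linarith [Nat.cast_nonneg (α := ℝ) c]) c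
        gcongr
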